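/- arXiv:1711.01029 — 2 statements merged into one kernel-verified Lean document; each statement's English description precedes it below -/
import Mathlib

section
/- Let H₊ be a Banach space that embeds continuously and densely into a Hilbert space H, so that H embeds continuously and densely into H₋ := H₊* (the dual of H₊). Let H : dom(H) ⊆ H → H be a self-adjoint operator. Then the two conditions are equivalent: (i) there exists C₁ ∈ (0,∞), independent of λ ∈ ℝ and μ ∈ (0,∞), with ‖(H − (λ ± iμ)I)⁻¹‖_{B(H₊,H₋)} ≤ C₁ for all λ ∈ ℝ, μ ∈ (0,∞); (ii) there exists C₂ ∈ (0,∞), independent of λ ∈ ℝ and μ ∈ (0,∞), with |(ψ, (H − (λ ± iμ)I)⁻¹ψ)_H| ≤ C₂‖ψ‖²_{H₊} for all ψ ∈ H₊, λ ∈ ℝ, μ ∈ (0,∞). -/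
open Complex

noncomputable section

lemma polar_bound
    {Hp : Type*} [NormedAddCommGroup Hp] [NormedSpace ℂ Hp]
    {H : Type*} [NormedAddCommGroup H] [InnerProductSpace ℂ H]
    (J : Hp →L[ℂ] H) (A : H →L[ℂ] H) (C : ℝ) (hC : 0 ≤ C)
    (hdiag : ∀ ψ : Hp, ‖inner (𝕜 := ℂ) (J ψ) (A (J ψ))‖ ≤ C * ‖ψ‖ ^ 2) :
    ∀ φ ψ : Hp, ‖inner (𝕜 := ℂ) (J φ) (A (J ψ))‖ ≤ 4 * C * ‖φ‖ * ‖ψ‖ := by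
  -- polarization identity
  have polar : ∀ φ ψ : Hp, (4:ℂ) * inner (𝕜 := ℂ) (J φ) (A (J ψ)) =
      inner (𝕜 := ℂ) (J (ψ+φ)) (A (J (ψ+φ))) - inner (𝕜 := ℂ) (J (ψ-φ)) (A (J (ψ-φ)))
      + Complex.I * inner (𝕜 := ℂ) (J (ψ + Complex.I • φ)) (A (J (ψ + Complex.I • φ)))
      - Complex.I * inner (𝕜 := ℂ) (J (ψ - Complex.I • φ)) (A (J (ψ - Complex.I • φ))) := by
    intro φ ψ
    simp only [map_add, map_sub, map_smul, inner_add_left, inner_add_right,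
      inner_sub_left, inner_sub_right, inner_smul_left, inner_smul_right,
      RCLike.star_def, Complex.conj_I, smul_eq_mul]
    ring_nf
    simp only [Complex.I_sq]
    ring
  -- crude bound
  have hB : ∀ φ ψ : Hp, ‖inner (𝕜 := ℂ) (J φ) (A (J ψ))‖
      ≤ C * (‖φ‖ + ‖ψ‖) ^ 2 := by
    intro φ ψ
    have hb : ∀ c : ℂ, ‖c‖ = 1 →
        ‖inner (𝕜 := ℂ) (J (ψ + c • φ)) (A (J (ψ + c • φ)))‖
          ≤ C * (‖φ‖ + ‖ψ‖) ^ 2 := by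
      intro c hc
      refine (hdiag _).trans ?_
      have h1 : ‖ψ + c • φ‖ ≤ ‖φ‖ + ‖ψ‖ := by
        calc ‖ψ + c • φ‖ ≤ ‖ψ‖ + ‖c • φ‖ := norm_add_le _ _
        _ = ‖ψ‖ + ‖φ‖ := by rw [norm_smul]; simp [hc]
        _ = ‖φ‖ + ‖ψ‖ := by ring
      have := mul_le_mul_of_nonneg_left (pow_le_pow_left₀ (norm_nonneg _) h1 2) hC
      linarith
    have h4 : (4:ℝ) * ‖inner (𝕜 := ℂ) (J φ) (A (J ψ))‖
        ≤ 4 * (C * (‖φ‖ + ‖ψ‖) ^ 2) := by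
      have := polar φ ψ
      have habs : ‖(4:ℂ) * inner (𝕜 := ℂ) (J φ) (A (J ψ))‖
          ≤ 4 * (C * (‖φ‖ + ‖ψ‖) ^ 2) := by
        rw [this]
        have e1 := hb 1 (by simp)
        have e2 := hb (-1) (by simp)
        have e3 := hb Complex.I (by simp)
        have e4 := hb (-Complex.I) (by simp)
        simp only [one_smul, neg_smul, ← sub_eq_add_neg] at e1 e2 e3 e4
        calc ‖inner (𝕜 := ℂ) (J (ψ+φ)) (A (J (ψ+φ)))
              - inner (𝕜 := ℂ) (J (ψ-φ)) (A (J (ψ-φ)))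
              + Complex.I * inner (𝕜 := ℂ) (J (ψ + Complex.I • φ)) (A (J (ψ + Complex.I • φ)))
              - Complex.I * inner (𝕜 := ℂ) (J (ψ - Complex.I • φ)) (A (J (ψ - Complex.I • φ)))‖
            ≤ ‖inner (𝕜 := ℂ) (J (ψ+φ)) (A (J (ψ+φ)))‖
              + ‖inner (𝕜 := ℂ) (J (ψ-φ)) (A (J (ψ-φ)))‖
              + ‖inner (𝕜 := ℂ) (J (ψ + Complex.I • φ)) (A (J (ψ + Complex.I • φ)))‖
              + ‖inner (𝕜 := ℂ) (J (ψ - Complex.I • φ)) (A (J (ψ - Complex.I • φ)))‖ := by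
              refine (norm_sub_le _ _).trans ?_
              gcongr ?_ + ?_
              · refine (norm_add_le _ _).trans ?_
                gcongr ?_ + ?_
                · exact norm_sub_le _ _
                · rw [norm_mul]; simp
              · rw [norm_mul]; simp
          _ ≤ 4 * (C * (‖φ‖ + ‖ψ‖) ^ 2) := by linarith
      rw [norm_mul] at habs
      simpa using habs
    linarith
  -- scaling
  intro φ ψ
  rcases eq_or_ne φ 0 with rfl | hφ
  · simp
  rcases eq_or_ne ψ 0 with rfl | hψ
  · simp
  have hφ' : (0:ℝ) < ‖φ‖ := norm_pos_iff.mpr hφ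
  have hψ' : (0:ℝ) < ‖ψ‖ := norm_pos_iff.mpr hψ
  set t : ℝ := Real.sqrt (‖ψ‖ / ‖φ‖) with ht
  have ht0 : 0 < t := Real.sqrt_pos.mpr (div_pos hψ' hφ')
  have key := hB (t • φ) (t⁻¹ • ψ)
  have heq : inner (𝕜 := ℂ) (J (t • φ)) (A (J (t⁻¹ • ψ)))
      = inner (𝕜 := ℂ) (J φ) (A (J ψ)) := by
    have h1 : J (t • φ) = (t:ℂ) • J φ := by
      rw [← Complex.coe_smul]; exact map_smul J (t:ℂ) φ
    have h2 : J (t⁻¹ • ψ) = ((t:ℂ))⁻¹ • J ψ := by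
      rw [← Complex.coe_smul, Complex.ofReal_inv]; exact map_smul J _ ψ
    rw [h1, h2, map_smul, inner_smul_left, inner_smul_right]
    have : (starRingEnd ℂ) (t:ℂ) = (t:ℂ) := Complex.conj_ofReal t
    rw [this]
    exact mul_inv_cancel_left₀ (by exact_mod_cast ht0.ne') _
  rw [heq] at key
  have hn1 : ‖t • φ‖ = t * ‖φ‖ := by rw [norm_smul, Real.norm_of_nonneg ht0.le]
  have hn2 : ‖t⁻¹ • ψ‖ = t⁻¹ * ‖ψ‖ := by
    rw [norm_smul, Real.norm_of_nonneg (inv_nonneg.mpr ht0.le)]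
  rw [hn1, hn2] at key
  have ht2 : t ^ 2 = ‖ψ‖ / ‖φ‖ := Real.sq_sqrt (div_pos hψ' hφ').le
  have e1 : t * ‖φ‖ = Real.sqrt (‖ψ‖ * ‖φ‖) := by
    have h : (t * ‖φ‖) ^ 2 = ‖ψ‖ * ‖φ‖ := by
      rw [mul_pow, ht2]; field_simp
    rw [← h, Real.sqrt_sq (by positivity)]
  have e2 : t⁻¹ * ‖ψ‖ = Real.sqrt (‖ψ‖ * ‖φ‖) := by
    have h : (t⁻¹ * ‖ψ‖) ^ 2 = ‖ψ‖ * ‖φ‖ := by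
      rw [mul_pow, inv_pow, ht2]; field_simp
    rw [← h, Real.sqrt_sq (by positivity)]
  have hfinal : (t * ‖φ‖ + t⁻¹ * ‖ψ‖) ^ 2 = 4 * ‖φ‖ * ‖ψ‖ := by
    rw [e1, e2, ← two_mul, mul_pow, Real.sq_sqrt (by positivity)]
    ring
  calc ‖inner (𝕜 := ℂ) (J φ) (A (J ψ))‖ ≤ C * ((t * ‖φ‖ + t⁻¹ * ‖ψ‖) ^ 2) := key
    _ = 4 * C * ‖φ‖ * ‖ψ‖ := by rw [hfinal]; ring


/-- Lemma 3.14. Let `H₊` be a Banach space embedding continuously and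
densely (via `J`) into a Hilbert space `H` (so that `H` embeds continuously and densely
into `H₋ = H₊*`), and let `T` be a self-adjoint operator in `H` with resolvents
`R z = (T − z)⁻¹` for nonreal `z`. Then the uniform bound
`‖(T − (λ ± iμ))⁻¹‖_{B(H₊,H₋)} ≤ C₁` (i.e. `|(Jφ, R(λ±iμ) Jψ)| ≤ C₁‖φ‖‖ψ‖`) holds for
some `C₁ > 0` independent of `λ ∈ ℝ`, `μ > 0`, if and only if
`|(Jψ, (T − (λ ± iμ))⁻¹ Jψ)| ≤ C₂‖ψ‖²` holds for some `C₂ > 0` independent of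
`λ ∈ ℝ`, `μ > 0`. -/
theorem statement12
    (Hp : Type*) [NormedAddCommGroup Hp] [NormedSpace ℂ Hp] [CompleteSpace Hp]
    (H : Type*) [NormedAddCommGroup H] [InnerProductSpace ℂ H] [CompleteSpace H]
    (J : Hp →L[ℂ] H) (hJinj : Function.Injective J) (hJdense : DenseRange J)
    (T : LinearPMap (RingHom.id ℂ) H H) (hT : IsSelfAdjoint T)
    (R : ℂ → (H →L[ℂ] H))
    (hR : ∀ z : ℂ, z.im ≠ 0 →
      (∀ f : H, ∃ hmem : R z f ∈ T.domain, T ⟨R z f, hmem⟩ - z • R z f = f) ∧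
      (∀ g : T.domain, R z (T g - z • (g : H)) = (g : H))) :
    (∃ C₁ > (0:ℝ), ∀ (lam μ : ℝ), 0 < μ → ∀ ψ φ : Hp,
        ‖inner (𝕜 := ℂ) (J φ) (R ((lam : ℂ) + (μ : ℂ) * Complex.I) (J ψ))‖
          ≤ C₁ * ‖φ‖ * ‖ψ‖ ∧
        ‖inner (𝕜 := ℂ) (J φ) (R ((lam : ℂ) - (μ : ℂ) * Complex.I) (J ψ))‖
          ≤ C₁ * ‖φ‖ * ‖ψ‖)
    ↔
    (∃ C₂ > (0:ℝ), ∀ (lam μ : ℝ), 0 < μ → ∀ ψ : Hp,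
        ‖inner (𝕜 := ℂ) (J ψ) (R ((lam : ℂ) + (μ : ℂ) * Complex.I) (J ψ))‖
          ≤ C₂ * ‖ψ‖ ^ 2 ∧
        ‖inner (𝕜 := ℂ) (J ψ) (R ((lam : ℂ) - (μ : ℂ) * Complex.I) (J ψ))‖
          ≤ C₂ * ‖ψ‖ ^ 2) := by
  constructor
  · rintro ⟨C₁, hC₁, h⟩
    refine ⟨C₁, hC₁, fun lam μ hμ ψ => ?_⟩
    obtain ⟨h1, h2⟩ := h lam μ hμ ψ ψ
    rw [sq]
    exact ⟨by simpa [mul_assoc] using h1, by simpa [mul_assoc] using h2⟩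
  · rintro ⟨C₂, hC₂, h⟩
    refine ⟨4 * C₂, by linarith, fun lam μ hμ ψ φ => ?_⟩
    constructor
    · exact polar_bound J (R ((lam : ℂ) + (μ : ℂ) * Complex.I)) C₂ hC₂.le
        (fun χ => (h lam μ hμ χ).1) φ ψ
    · exact polar_bound J (R ((lam : ℂ) - (μ : ℂ) * Complex.I)) C₂ hC₂.le
        (fun χ => (h lam μ hμ χ).2) φ ψ

end
end

section
/- Let (a,b) ⊂ ℝ be an open interval and let f, φ, ψ be nonnegative real-valued functions on (a,b), with f bounded and measurable and φ, ψ ∈ L¹((a,b); dx). Assume there exist constants ω ∈ [0,∞) and θ ∈ [0,1) such that f(λ) ≤ ω + ∫_λ^b [φ(t)f(t)^θ + ψ(t)f(t)] dt for all λ ∈ (a,b). Then f(λ) ≤ e^{∫_λ^b ψ(t)dt} · [ω^{1−θ} + (1−θ)∫_λ^b φ(s) e^{(θ−1)∫_s^b ψ(t)dt} ds]^{1/(1−θ)} for all λ ∈ (a,b). -/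
open MeasureTheory

noncomputable section


lemma s14_identity (b θ c : ℝ) (hθ0 : 0 ≤ θ) (hθ1 : θ < 1) (hc : 0 < c)
    (φ ψ : ℝ → ℝ) (hφc : Continuous φ) (hψc : Continuous ψ)
    (hφ0 : ∀ x, 0 ≤ φ x) (hψ0 : ∀ x, 0 ≤ ψ x)
    (lam : ℝ) (hlam : lam ≤ b) :
    (fun l => Real.exp (∫ t in l..b, ψ t) *
      (c ^ (1-θ) + (1-θ) * ∫ s in l..b, φ s * Real.exp ((θ-1) * ∫ t in s..b, ψ t)) ^ (1/(1-θ))) lam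
    = c + ∫ x in lam..b,
        (φ x * ((fun l => Real.exp (∫ t in l..b, ψ t) *
      (c ^ (1-θ) + (1-θ) * ∫ s in l..b, φ s * Real.exp ((θ-1) * ∫ t in s..b, ψ t)) ^ (1/(1-θ))) x) ^ θ
        + ψ x * (fun l => Real.exp (∫ t in l..b, ψ t) *
      (c ^ (1-θ) + (1-θ) * ∫ s in l..b, φ s * Real.exp ((θ-1) * ∫ t in s..b, ψ t)) ^ (1/(1-θ))) x) := by
  have h1θ : (0:ℝ) < 1 - θ := by linarith
  set Ψ : ℝ → ℝ := fun l => ∫ t in l..b, ψ t with hΨdef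
  have hΨd : ∀ x, HasDerivAt Ψ (-ψ x) x := fun x =>
    intervalIntegral.integral_hasDerivAt_left (hψc.intervalIntegrable _ _)
      (hψc.stronglyMeasurableAtFilter _ _) hψc.continuousAt
  have hΨc : Continuous Ψ := by
    rw [continuous_iff_continuousAt]; exact fun x => (hΨd x).continuousAt
  have hΨnn : ∀ x ≤ b, 0 ≤ Ψ x := fun x hx =>
    intervalIntegral.integral_nonneg hx (fun t _ => hψ0 t)
  set g : ℝ → ℝ := fun s => φ s * Real.exp ((θ-1) * Ψ s) with hgdef
  have hgc : Continuous g := hφc.mul ((continuous_const.mul hΨc).rexp)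
  have hgnn : ∀ x, 0 ≤ g x := fun x => mul_nonneg (hφ0 x) (Real.exp_pos _).le
  set P : ℝ → ℝ := fun l => ∫ s in l..b, g s with hPdef
  have hPd : ∀ x, HasDerivAt P (-g x) x := fun x =>
    intervalIntegral.integral_hasDerivAt_left (hgc.intervalIntegrable _ _)
      (hgc.stronglyMeasurableAtFilter _ _) hgc.continuousAt
  have hPc : Continuous P := by
    rw [continuous_iff_continuousAt]; exact fun x => (hPd x).continuousAt
  have hPnn : ∀ x ≤ b, 0 ≤ P x := fun x hx =>
    intervalIntegral.integral_nonneg hx (fun t _ => hgnn t)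
  set inner : ℝ → ℝ := fun l => c ^ (1-θ) + (1-θ) * P l with hinnerdef
  have hinnerd : ∀ x, HasDerivAt inner ((1-θ) * (-g x)) x := fun x =>
    ((hPd x).const_mul (1-θ)).const_add _
  have hinnerpos : ∀ x ≤ b, 0 < inner x := fun x hx =>
    add_pos_of_pos_of_nonneg (Real.rpow_pos_of_pos hc _)
      (mul_nonneg h1θ.le (hPnn x hx))
  set q : ℝ := 1/(1-θ) with hqdef
  have hq0 : 0 < q := by positivity
  set R : ℝ → ℝ := fun l => Real.exp (Ψ l) * inner l ^ q with hRdef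
  have hRpos : ∀ x ≤ b, 0 < R x := fun x hx =>
    mul_pos (Real.exp_pos _) (Real.rpow_pos_of_pos (hinnerpos x hx) _)
  -- derivative of R on Iic b
  have hRd : ∀ x ∈ Set.uIcc lam b, HasDerivAt R (-(φ x * R x ^ θ + ψ x * R x)) x := by
    intro x hx
    rw [Set.uIcc_of_le hlam] at hx
    have hxb : x ≤ b := hx.2
    have hin : inner x ≠ 0 := (hinnerpos x hxb).ne'
    have hd1 : HasDerivAt (fun l => Real.exp (Ψ l)) (Real.exp (Ψ x) * (-ψ x)) x :=
      (hΨd x).exp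
    have hd2 : HasDerivAt (fun l => inner l ^ q) ((1-θ) * (-g x) * q * inner x ^ (q-1)) x :=
      (hinnerd x).rpow_const (Or.inl hin)
    have := hd1.mul hd2
    convert this using 1
    · rfl
    · rfl
    · rfl
    have hRθ : R x ^ θ = Real.exp (θ * Ψ x) * inner x ^ (q * θ) := by
      rw [hRdef]
      rw [Real.mul_rpow (Real.exp_pos _).le (Real.rpow_pos_of_pos (hinnerpos x hxb) _).le,
        ← Real.exp_mul, ← Real.rpow_mul (hinnerpos x hxb).le, mul_comm (Ψ x) θ]
    have hq1 : q - 1 = q * θ := by rw [hqdef]; field_simp; ring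
    have hexp : Real.exp (Ψ x) * Real.exp ((θ-1) * Ψ x) = Real.exp (θ * Ψ x) := by
      rw [← Real.exp_add]; ring_nf
    have hcoef : (1-θ) * q = 1 := by rw [hqdef]; field_simp
    rw [hRθ]
    simp only [hRdef, hgdef, hq1]
    rw [← hexp]
    linear_combination (φ x * Real.exp (Ψ x) * Real.exp ((θ-1) * Ψ x) * inner x ^ (q*θ)) * hcoef
  -- integrability of the derivative
  have hinnerc : Continuous inner := continuous_const.add (continuous_const.mul hPc)
  have hRc : Continuous R :=
    (hΨc.rexp).mul (hinnerc.rpow_const (fun x => Or.inr hq0.le))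
  have hint : IntervalIntegrable (fun x => -(φ x * R x ^ θ + ψ x * R x)) volume lam b :=
    (((hφc.mul (hRc.rpow_const (fun x => Or.inr hθ0))).add (hψc.mul hRc)).neg).intervalIntegrable _ _
  have hftc := intervalIntegral.integral_eq_sub_of_hasDerivAt hRd hint
  rw [intervalIntegral.integral_neg] at hftc
  have hRb : R b = c := by
    simp only [hRdef, hΨdef, hPdef, hinnerdef, intervalIntegral.integral_same, Real.exp_zero,
      mul_zero, add_zero, one_mul]
    rw [← Real.rpow_mul hc.le, mul_one_div_cancel h1θ.ne', Real.rpow_one]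
  have : R lam = c + ∫ x in lam..b, (φ x * R x ^ θ + ψ x * R x) := by
    rw [← hRb]; linarith [hftc]
  exact this

lemma s14_core (a b : ℝ) (hab : a < b) (f φ ψ : ℝ → ℝ)
    (hφc : Continuous φ) (hψc : Continuous ψ)
    (hφ0 : ∀ x, 0 ≤ φ x) (hψ0 : ∀ x, 0 ≤ ψ x)
    (hf_nonneg : ∀ x ∈ Set.Ioo a b, 0 ≤ f x)
    (M : ℝ) (hM0 : 0 ≤ M) (hf_bdd : ∀ x ∈ Set.Ioo a b, f x ≤ M)
    (hf_meas : AEMeasurable f (volume.restrict (Set.Ioo a b)))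
    (ω θ : ℝ) (hω : 0 ≤ ω) (hθ0 : 0 ≤ θ) (hθ1 : θ < 1)
    (hineq : ∀ lam ∈ Set.Ioo a b,
      f lam ≤ ω + ∫ t in Set.Ioo lam b, (φ t * f t ^ θ + ψ t * f t)) :
    ∀ lam ∈ Set.Ioo a b,
      f lam ≤ Real.exp (∫ t in Set.Ioo lam b, ψ t) *
        (ω ^ (1 - θ) + (1 - θ) *
          ∫ s in Set.Ioo lam b, φ s * Real.exp ((θ - 1) * ∫ t in Set.Ioo s b, ψ t))
            ^ (1 / (1 - θ)) := by
  have h1θ : (0:ℝ) < 1 - θ := by linarith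
  have hIoo : ∀ (h : ℝ → ℝ) (x : ℝ), x ≤ b →
      ∫ t in Set.Ioo x b, h t = ∫ t in x..b, h t := fun h x hx => by
    rw [intervalIntegral.integral_of_le hx, integral_Ioc_eq_integral_Ioo]
  set Ψ : ℝ → ℝ := fun l => ∫ t in l..b, ψ t with hΨdef
  have hΨd : ∀ x, HasDerivAt Ψ (-ψ x) x := fun x =>
    intervalIntegral.integral_hasDerivAt_left (hψc.intervalIntegrable _ _)
      (hψc.stronglyMeasurableAtFilter _ _) hψc.continuousAt
  have hΨc : Continuous Ψ := by
    rw [continuous_iff_continuousAt]; exact fun x => (hΨd x).continuousAt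
  have hΨnn : ∀ x ≤ b, 0 ≤ Ψ x := fun x hx =>
    intervalIntegral.integral_nonneg hx (fun t _ => hψ0 t)
  set g : ℝ → ℝ := fun s => φ s * Real.exp ((θ-1) * Ψ s) with hgdef
  have hgc : Continuous g := hφc.mul ((continuous_const.mul hΨc).rexp)
  have hgnn : ∀ x, 0 ≤ g x := fun x => mul_nonneg (hφ0 x) (Real.exp_pos _).le
  set P : ℝ → ℝ := fun l => ∫ s in l..b, g s with hPdef
  have hPd : ∀ x, HasDerivAt P (-g x) x := fun x =>
    intervalIntegral.integral_hasDerivAt_left (hgc.intervalIntegrable _ _)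
      (hgc.stronglyMeasurableAtFilter _ _) hgc.continuousAt
  have hPc : Continuous P := by
    rw [continuous_iff_continuousAt]; exact fun x => (hPd x).continuousAt
  have hPnn : ∀ x ≤ b, 0 ≤ P x := fun x hx =>
    intervalIntegral.integral_nonneg hx (fun t _ => hgnn t)
  set q : ℝ := 1/(1-θ) with hqdef
  have hq0 : 0 < q := by positivity
  -- dominator
  set D : ℝ → ℝ := fun t => φ t * M ^ θ + ψ t * M with hDdef
  have hDc : Continuous D := (hφc.mul continuous_const).add (hψc.mul continuous_const)
  have hD0 : ∀ t, 0 ≤ D t := fun t => add_nonneg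
    (mul_nonneg (hφ0 t) (Real.rpow_nonneg hM0 θ)) (mul_nonneg (hψ0 t) hM0)
  have hDint : ∀ u v : ℝ, IntegrableOn D (Set.Ioo u v) :=
    fun u v => (hDc.integrableOn_Icc).mono_set Set.Ioo_subset_Icc_self
  have hbound : ∀ x ∈ Set.Ioo a b, φ x * f x ^ θ + ψ x * f x ≤ D x := by
    intro x hx
    have h1 : f x ^ θ ≤ M ^ θ :=
      Real.rpow_le_rpow (hf_nonneg x hx) (hf_bdd x hx) hθ0
    have h2 : f x ≤ M := hf_bdd x hx
    exact add_le_add (mul_le_mul_of_nonneg_left h1 (hφ0 x))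
      (mul_le_mul_of_nonneg_left h2 (hψ0 x))
  have hFnn : ∀ x ∈ Set.Ioo a b, 0 ≤ φ x * f x ^ θ + ψ x * f x := fun x hx =>
    add_nonneg (mul_nonneg (hφ0 x) (Real.rpow_nonneg (hf_nonneg x hx) θ))
      (mul_nonneg (hψ0 x) (hf_nonneg x hx))
  -- integrability of the nonlinear integrand
  have hrpowc : Continuous (fun x : ℝ => x ^ θ) :=
    continuous_iff_continuousAt.mpr (fun x => Real.continuousAt_rpow_const x θ (Or.inr hθ0))
  have hfθmeas : AEMeasurable (fun t => f t ^ θ) (volume.restrict (Set.Ioo a b)) :=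
    hrpowc.measurable.comp_aemeasurable hf_meas
  have hFmeas : AEStronglyMeasurable (fun t => φ t * f t ^ θ + ψ t * f t)
      (volume.restrict (Set.Ioo a b)) :=
    ((hφc.aemeasurable.mul hfθmeas).add (hψc.aemeasurable.mul hf_meas)).aestronglyMeasurable
  have hFint : IntegrableOn (fun t => φ t * f t ^ θ + ψ t * f t) (Set.Ioo a b) := by
    apply Integrable.mono (hDint a b) hFmeas
    filter_upwards [ae_restrict_mem measurableSet_Ioo] with x hx
    rw [Real.norm_eq_abs, Real.norm_eq_abs, abs_of_nonneg (hFnn x hx), abs_of_nonneg (hD0 x)]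
    exact hbound x hx
  have hFintOn : ∀ u v, Set.Ioo u v ⊆ Set.Ioo a b →
      IntegrableOn (fun t => φ t * f t ^ θ + ψ t * f t) (Set.Ioo u v) :=
    fun u v hsub => hFint.mono_set hsub
  have key : ∀ ε : ℝ, 0 < ε → ∀ lam ∈ Set.Ioo a b,
      f lam ≤ Real.exp (Ψ lam) * ((ω+ε) ^ (1-θ) + (1-θ) * P lam) ^ q := by
    intro ε hε
    have hc : 0 < ω + ε := by linarith
    set R : ℝ → ℝ := fun l => Real.exp (Ψ l) * ((ω+ε) ^ (1-θ) + (1-θ) * P l) ^ q with hRdef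
    have hId : ∀ l, l ≤ b → R l = (ω+ε) + ∫ x in l..b, (φ x * R x ^ θ + ψ x * R x) :=
      fun l hl => s14_identity b θ (ω+ε) hθ0 hθ1 hc φ ψ hφc hψc hφ0 hψ0 l hl
    have hIdIoo : ∀ l, l ≤ b →
        R l = (ω+ε) + ∫ x in Set.Ioo l b, (φ x * R x ^ θ + ψ x * R x) := by
      intro l hl
      rw [hIoo (fun x => φ x * R x ^ θ + ψ x * R x) l hl]
      exact hId l hl
    have hinnerc : Continuous (fun l => (ω+ε) ^ (1-θ) + (1-θ) * P l) :=
      continuous_const.add (continuous_const.mul hPc)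
    have hRc : Continuous R := (hΨc.rexp).mul (hinnerc.rpow_const (fun x => Or.inr hq0.le))
    have hRge : ∀ l, l ≤ b → ω + ε ≤ R l := by
      intro l hl
      have h1 : ((ω+ε) ^ (1-θ)) ^ q ≤ ((ω+ε) ^ (1-θ) + (1-θ) * P l) ^ q :=
        Real.rpow_le_rpow (Real.rpow_nonneg hc.le _)
          (le_add_of_nonneg_right (mul_nonneg h1θ.le (hPnn l hl))) hq0.le
      have h2 : ((ω+ε) ^ (1-θ)) ^ q = ω + ε := by
        rw [← Real.rpow_mul hc.le, mul_one_div_cancel h1θ.ne', Real.rpow_one]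
      calc ω + ε = 1 * ((ω+ε) ^ (1-θ)) ^ q := by rw [h2, one_mul]
        _ ≤ Real.exp (Ψ l) * ((ω+ε) ^ (1-θ) + (1-θ) * P l) ^ q :=
            mul_le_mul (Real.one_le_exp (hΨnn l hl)) h1
              (Real.rpow_nonneg (Real.rpow_nonneg hc.le _) _) (Real.exp_pos _).le
    intro lam hlam
    by_contra hcon
    push_neg at hcon
    set S : Set ℝ := {l | l ∈ Set.Ioo a b ∧ R l < f l} with hSdef
    have hSne : S.Nonempty := ⟨lam, hlam, hcon⟩
    set G : ℝ → ℝ := fun u => ∫ t in u..b, D t with hGdef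
    have hGd : ∀ x, HasDerivAt G (-D x) x := fun x =>
      intervalIntegral.integral_hasDerivAt_left (hDc.intervalIntegrable _ _)
        (hDc.stronglyMeasurableAtFilter _ _) hDc.continuousAt
    have hGc : Continuous G := continuous_iff_continuousAt.mpr fun x => (hGd x).continuousAt
    have hGb : G b = 0 := intervalIntegral.integral_same
    have hGanti : ∀ u v, u ≤ v → G v ≤ G u := by
      intro u v huv
      have hadd : (∫ t in u..v, D t) + (∫ t in v..b, D t) = ∫ t in u..b, D t :=
        intervalIntegral.integral_add_adjacent_intervals
          (hDc.intervalIntegrable u v) (hDc.intervalIntegrable v b)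
      have h0 : 0 ≤ ∫ t in u..v, D t := intervalIntegral.integral_nonneg huv (fun t _ => hD0 t)
      simp only [hGdef]
      linarith [hadd]
    obtain ⟨δ₀, hδ₀, hδ₀p⟩ := Metric.continuousAt_iff.mp hGc.continuousAt ε hε
    set b' : ℝ := max ((a+b)/2) (b - δ₀/2) with hb'def
    have hb'ab : b' ∈ Set.Ioo a b :=
      ⟨lt_of_lt_of_le (by linarith) (le_max_left _ _), max_lt (by linarith) (by linarith)⟩
    have hGb' : G b' < ε := by
      have hd : dist b' b < δ₀ := by
        rw [Real.dist_eq, abs_of_nonpos (by linarith [hb'ab.2])]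
        have : b - δ₀/2 ≤ b' := le_max_right _ _
        linarith
      have h := hδ₀p hd
      rw [hGb, Real.dist_eq, sub_zero] at h
      exact lt_of_le_of_lt (le_abs_self _) h
    have hS_ub : ∀ l ∈ S, l ≤ b' := by
      intro l hl
      by_contra hlb
      push_neg at hlb
      obtain ⟨hlab, hRl⟩ := hl
      have h1 : f l ≤ ω + ∫ t in Set.Ioo l b, D t := by
        refine (hineq l hlab).trans (add_le_add_right ?_ ω)
        refine setIntegral_mono_on
          (hFintOn l b (fun x hx => ⟨lt_trans hlab.1 hx.1, hx.2⟩)) (hDint l b)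
          measurableSet_Ioo (fun x hx => hbound x ⟨lt_trans hlab.1 hx.1, hx.2⟩)
      have h2 : ∫ t in Set.Ioo l b, D t = G l := hIoo D l hlab.2.le
      have h3 : G l ≤ G b' := hGanti b' l hlb.le
      have h4 : ω + ε ≤ R l := hRge l hlab.2.le
      linarith
    have hbdd : BddAbove S := ⟨b', hS_ub⟩
    set c₀ : ℝ := sSup S with hc₀def
    have hc₀b' : c₀ ≤ b' := csSup_le hSne hS_ub
    obtain ⟨s₀, hs₀S⟩ := hSne
    have hc₀a : a < c₀ := lt_of_lt_of_le hs₀S.1.1 (le_csSup hbdd hs₀S)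
    have hc₀mem : c₀ ∈ Set.Ioo a b := ⟨hc₀a, lt_of_le_of_lt hc₀b' hb'ab.2⟩
    have hSne' : S.Nonempty := ⟨s₀, hs₀S⟩
    have hgood : ∀ μ, c₀ < μ → μ ∈ Set.Ioo a b → f μ ≤ R μ := by
      intro μ hμ hμab
      by_contra hcm
      push_neg at hcm
      exact absurd (le_csSup hbdd ⟨hμab, hcm⟩) (not_le.mpr hμ)
    have hRFint : IntegrableOn (fun t => φ t * R t ^ θ + ψ t * R t) (Set.Ioo c₀ b) :=
      (((hφc.mul (hRc.rpow_const (fun x => Or.inr hθ0))).add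
        (hψc.mul hRc)).integrableOn_Icc).mono_set Set.Ioo_subset_Icc_self
    have hkey : ∫ t in Set.Ioo c₀ b, (φ t * f t ^ θ + ψ t * f t)
        ≤ ∫ t in Set.Ioo c₀ b, (φ t * R t ^ θ + ψ t * R t) := by
      refine setIntegral_mono_on
        (hFintOn c₀ b (fun x hx => ⟨lt_trans hc₀a hx.1, hx.2⟩)) hRFint measurableSet_Ioo ?_
      intro x hx
      have hxab : x ∈ Set.Ioo a b := ⟨lt_trans hc₀a hx.1, hx.2⟩
      have hfR : f x ≤ R x := hgood x hx.1 hxab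
      have h1 : f x ^ θ ≤ R x ^ θ := Real.rpow_le_rpow (hf_nonneg x hxab) hfR hθ0
      exact add_le_add (mul_le_mul_of_nonneg_left h1 (hφ0 x))
        (mul_le_mul_of_nonneg_left hfR (hψ0 x))
    obtain ⟨δ₁, hδ₁, hδ₁p⟩ := Metric.continuousAt_iff.mp hRc.continuousAt (ε/2) (by linarith)
    set H : ℝ → ℝ := fun u => ∫ t in u..c₀, D t with hHdef
    have hHd : ∀ x, HasDerivAt H (-D x) x := fun x =>
      intervalIntegral.integral_hasDerivAt_left (hDc.intervalIntegrable _ _)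
        (hDc.stronglyMeasurableAtFilter _ _) hDc.continuousAt
    have hHc : Continuous H := continuous_iff_continuousAt.mpr fun x => (hHd x).continuousAt
    obtain ⟨δ₂, hδ₂, hδ₂p⟩ := Metric.continuousAt_iff.mp hHc.continuousAt (ε/2) (by linarith)
    obtain ⟨s, hsS, hs_lt⟩ := exists_lt_of_lt_csSup hSne'
      (show c₀ - min δ₁ δ₂ < sSup S by
        have : 0 < min δ₁ δ₂ := lt_min hδ₁ hδ₂
        rw [← hc₀def]; linarith)
    have hsc₀ : s ≤ c₀ := le_csSup hbdd hsS
    have hds : dist s c₀ < min δ₁ δ₂ := by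
      rw [Real.dist_eq, abs_of_nonpos (by linarith)]
      linarith
    have hRs : R c₀ - ε/2 < R s := by
      have h := hδ₁p (lt_of_lt_of_le hds (min_le_left _ _))
      rw [Real.dist_eq] at h
      have := (abs_lt.mp h).1
      linarith
    have hHs : ∫ t in s..c₀, D t < ε/2 := by
      have h := hδ₂p (lt_of_lt_of_le hds (min_le_right _ _))
      have hHc₀ : H c₀ = 0 := intervalIntegral.integral_same
      rw [hHc₀, Real.dist_eq, sub_zero] at h
      exact lt_of_le_of_lt (le_abs_self _) h
    have hsub1 : Set.Ioc s c₀ ⊆ Set.Ioo a b :=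
      fun x hx => ⟨lt_trans hsS.1.1 hx.1, lt_of_le_of_lt hx.2 hc₀mem.2⟩
    have hint1 : IntervalIntegrable (fun t => φ t * f t ^ θ + ψ t * f t) volume s c₀ :=
      (intervalIntegrable_iff_integrableOn_Ioc_of_le hsc₀).mpr (hFint.mono_set hsub1)
    have hint2 : IntervalIntegrable (fun t => φ t * f t ^ θ + ψ t * f t) volume c₀ b := by
      rw [intervalIntegrable_iff_integrableOn_Ioc_of_le hc₀mem.2.le,
        integrableOn_Ioc_iff_integrableOn_Ioo]
      exact hFintOn c₀ b (fun x hx => ⟨lt_trans hc₀a hx.1, hx.2⟩)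
    have hsplit : ∫ t in Set.Ioo s b, (φ t * f t ^ θ + ψ t * f t)
        = (∫ t in s..c₀, (φ t * f t ^ θ + ψ t * f t))
          + ∫ t in Set.Ioo c₀ b, (φ t * f t ^ θ + ψ t * f t) := by
      rw [hIoo _ s hsS.1.2.le, ← intervalIntegral.integral_add_adjacent_intervals hint1 hint2,
        hIoo _ c₀ hc₀mem.2.le]
    have hmid : ∫ t in s..c₀, (φ t * f t ^ θ + ψ t * f t) ≤ ∫ t in s..c₀, D t := by
      refine intervalIntegral.integral_mono_on hsc₀ hint1 (hDc.intervalIntegrable _ _) ?_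
      intro x hx
      exact hbound x ⟨lt_of_lt_of_le hsS.1.1 hx.1, lt_of_le_of_lt hx.2 hc₀mem.2⟩
    have hIdc₀ := hIdIoo c₀ hc₀mem.2.le
    have hfs := hineq s hsS.1
    rw [hsplit] at hfs
    have hfinal : f s ≤ R c₀ - ε/2 := by linarith
    linarith [hsS.2]
  intro lam hlam
  have h1 : ∫ s in Set.Ioo lam b, φ s * Real.exp ((θ-1) * ∫ t in Set.Ioo s b, ψ t) = P lam := by
    have hcong : ∀ s ∈ Set.Ioo lam b,
        φ s * Real.exp ((θ-1) * ∫ t in Set.Ioo s b, ψ t) = g s := by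
      intro s hs
      rw [hgdef]
      simp only
      rw [hIoo ψ s hs.2.le]
    rw [setIntegral_congr_fun measurableSet_Ioo hcong, hIoo g lam hlam.2.le]
  rw [hIoo ψ lam hlam.2.le]
  have hgoal : (∫ s in Set.Ioo lam b, φ s * Real.exp ((θ - 1) * ∫ t in Set.Ioo s b, ψ t)) = P lam := h1
  rw [hgoal]
  have htends : Filter.Tendsto
      (fun ε : ℝ => Real.exp (Ψ lam) * ((ω+ε) ^ (1-θ) + (1-θ) * P lam) ^ q)
      (nhdsWithin 0 (Set.Ioi 0))
      (nhds (Real.exp (Ψ lam) * (ω ^ (1-θ) + (1-θ) * P lam) ^ q)) := by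
    have t1 : Filter.Tendsto (fun ε : ℝ => ω + ε) (nhdsWithin 0 (Set.Ioi 0)) (nhds ω) := by
      have h := (((continuous_const (y := ω)).add continuous_id).tendsto (0:ℝ)).mono_left
        (nhdsWithin_le_nhds (s := Set.Ioi (0:ℝ)))
      simpa [Pi.add_def] using h
    have t2 : Filter.Tendsto (fun ε : ℝ => (ω+ε) ^ (1-θ)) (nhdsWithin 0 (Set.Ioi 0))
        (nhds (ω ^ (1-θ))) :=
      ((Real.continuousAt_rpow_const ω (1-θ) (Or.inr h1θ.le)).tendsto).comp t1
    have t3 : Filter.Tendsto (fun ε : ℝ => (ω+ε) ^ (1-θ) + (1-θ) * P lam)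
        (nhdsWithin 0 (Set.Ioi 0)) (nhds (ω ^ (1-θ) + (1-θ) * P lam)) :=
      t2.add tendsto_const_nhds
    have t4 : Filter.Tendsto (fun ε : ℝ => ((ω+ε) ^ (1-θ) + (1-θ) * P lam) ^ q)
        (nhdsWithin 0 (Set.Ioi 0)) (nhds ((ω ^ (1-θ) + (1-θ) * P lam) ^ q)) :=
      ((Real.continuousAt_rpow_const _ q (Or.inr hq0.le)).tendsto).comp t3
    exact tendsto_const_nhds.mul t4
  refine ge_of_tendsto htends ?_
  filter_upwards [self_mem_nhdsWithin] with ε hε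
  exact key ε hε lam hlam


/-- Lemma 7.A.1 in [ABG96]. Let `(a,b) ⊂ ℝ` and let `f, φ, ψ` be
nonnegative functions on `(a,b)`, `f` bounded and measurable, `φ, ψ ∈ L¹((a,b))`.
If `f(λ) ≤ ω + ∫_λ^b [φ(t) f(t)^θ + ψ(t) f(t)] dt` on `(a,b)` for constants
`ω ∈ [0,∞)`, `θ ∈ [0,1)`, then
`f(λ) ≤ e^{∫_λ^b ψ} [ω^{1−θ} + (1−θ)∫_λ^b φ(s) e^{(θ−1)∫_s^b ψ} ds]^{1/(1−θ)}`
on `(a,b)`. -/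
theorem statement14
    (a b : ℝ) (hab : a < b) (f φ ψ : ℝ → ℝ)
    (hf_nonneg : ∀ x ∈ Set.Ioo a b, 0 ≤ f x)
    (hφ_nonneg : ∀ x ∈ Set.Ioo a b, 0 ≤ φ x)
    (hψ_nonneg : ∀ x ∈ Set.Ioo a b, 0 ≤ ψ x)
    (hf_bdd : ∃ M : ℝ, ∀ x ∈ Set.Ioo a b, f x ≤ M)
    (hf_meas : AEMeasurable f (volume.restrict (Set.Ioo a b)))
    (hφ_int : IntegrableOn φ (Set.Ioo a b))
    (hψ_int : IntegrableOn ψ (Set.Ioo a b))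
    (ω θ : ℝ) (hω : 0 ≤ ω) (hθ : θ ∈ Set.Ico (0:ℝ) 1)
    (hineq : ∀ lam ∈ Set.Ioo a b,
      f lam ≤ ω + ∫ t in Set.Ioo lam b, (φ t * f t ^ θ + ψ t * f t)) :
    ∀ lam ∈ Set.Ioo a b,
      f lam ≤ Real.exp (∫ t in Set.Ioo lam b, ψ t) *
        (ω ^ (1 - θ) + (1 - θ) *
          ∫ s in Set.Ioo lam b, φ s * Real.exp ((θ - 1) * ∫ t in Set.Ioo s b, ψ t))
            ^ (1 / (1 - θ)) := by
  obtain ⟨hθ0, hθ1⟩ := hθ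
  have h1θ : (0:ℝ) < 1 - θ := by linarith
  obtain ⟨M, hfM⟩ := hf_bdd
  set M' : ℝ := max M 0 with hM'def
  have hM'0 : 0 ≤ M' := le_max_right _ _
  have hMθ0 : 0 ≤ M' ^ θ := Real.rpow_nonneg hM'0 θ
  have hfM' : ∀ x ∈ Set.Ioo a b, f x ≤ M' := fun x hx => (hfM x hx).trans (le_max_left _ _)
  set φ₀ : ℝ → ℝ := (Set.Ioo a b).indicator φ with hφ₀def
  set ψ₀ : ℝ → ℝ := (Set.Ioo a b).indicator ψ with hψ₀def
  have hφ₀int : Integrable φ₀ volume := (integrable_indicator_iff measurableSet_Ioo).mpr hφ_int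
  have hψ₀int : Integrable ψ₀ volume := (integrable_indicator_iff measurableSet_Ioo).mpr hψ_int
  have hφ₀nn : ∀ x, 0 ≤ φ₀ x := fun x => Set.indicator_nonneg (fun y hy => hφ_nonneg y hy) x
  have hψ₀nn : ∀ x, 0 ≤ ψ₀ x := fun x => Set.indicator_nonneg (fun y hy => hψ_nonneg y hy) x
  -- continuous nonnegative approximations
  have happrox : ∀ (h₀ : ℝ → ℝ), Integrable h₀ volume → (∀ x, 0 ≤ h₀ x) → ∀ n : ℕ,
      ∃ gc : ℝ → ℝ, Continuous gc ∧ (∀ x, 0 ≤ gc x) ∧ Integrable gc volume ∧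
        (∫ x, |h₀ x - gc x|) ≤ 1/(n+1 : ℝ) := by
    intro h₀ hint hnn n
    obtain ⟨g, hgsupp, hgerr, hgc, hgint⟩ := hint.exists_hasCompactSupport_integral_sub_le
      (show (0:ℝ) < 1/(n+1) by positivity)
    refine ⟨fun x => max (g x) 0, hgc.max continuous_const, fun x => le_max_right _ _,
      hgint.pos_part, le_trans ?_ hgerr⟩
    refine integral_mono ((hint.sub hgint.pos_part).abs) ((hint.sub hgint).norm) ?_
    intro x
    have h1 : h₀ x = max (h₀ x) 0 := (max_eq_left (hnn x)).symm
    calc |h₀ x - max (g x) 0| = |max (h₀ x) 0 - max (g x) 0| := by rw [← h1]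
      _ ≤ |h₀ x - g x| := abs_max_sub_max_le_abs _ _ _
      _ = ‖h₀ x - g x‖ := (Real.norm_eq_abs _).symm
  choose Φ hΦc hΦnn hΦint hΦerr using happrox φ₀ hφ₀int hφ₀nn
  choose Θ hΘc hΘnn hΘint hΘerr using happrox ψ₀ hψ₀int hψ₀nn
  -- errors on the interval
  have herr' : ∀ (h h₀ gc : ℝ → ℝ) (e : ℝ), h₀ = (Set.Ioo a b).indicator h →
      Integrable h₀ volume → Integrable gc volume → (∫ x, |h₀ x - gc x|) ≤ e →
      (∫ x in Set.Ioo a b, |h x - gc x|) ≤ e := by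
    intro h h₀ gc e hdef hint hgint herr
    have hcong : Set.EqOn (fun x => |h x - gc x|) (fun x => |h₀ x - gc x|) (Set.Ioo a b) := by
      intro x hx; simp only; rw [hdef, Set.indicator_of_mem hx]
    rw [setIntegral_congr_fun measurableSet_Ioo hcong]
    refine le_trans (setIntegral_le_integral (hint.sub hgint).abs ?_) herr
    filter_upwards with x using abs_nonneg _
  have hΦE : ∀ n, (∫ x in Set.Ioo a b, |φ x - Φ n x|) ≤ 1/(n+1:ℝ) :=
    fun n => herr' φ φ₀ (Φ n) _ hφ₀def hφ₀int (hΦint n) (hΦerr n)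
  have hΘE : ∀ n, (∫ x in Set.Ioo a b, |ψ x - Θ n x|) ≤ 1/(n+1:ℝ) :=
    fun n => herr' ψ ψ₀ (Θ n) _ hψ₀def hψ₀int (hΘint n) (hΘerr n)
  -- basic integrability facts
  have hrpow : ∀ p : ℝ, 0 ≤ p → Continuous (fun x : ℝ => x ^ p) := fun p hp =>
    continuous_iff_continuousAt.mpr (fun x => Real.continuousAt_rpow_const x p (Or.inr hp))
  have hfθmeas : AEMeasurable (fun t => f t ^ θ) (volume.restrict (Set.Ioo a b)) :=
    (hrpow θ hθ0).measurable.comp_aemeasurable hf_meas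
  have hfθbd : ∀ x ∈ Set.Ioo a b, f x ^ θ ≤ M' ^ θ := fun x hx =>
    Real.rpow_le_rpow (hf_nonneg x hx) (hfM' x hx) hθ0
  have hfθnn : ∀ x ∈ Set.Ioo a b, 0 ≤ f x ^ θ := fun x hx =>
    Real.rpow_nonneg (hf_nonneg x hx) θ
  have hmul_int : ∀ (u v : ℝ → ℝ) (C : ℝ), 0 ≤ C → IntegrableOn u (Set.Ioo a b) →
      AEMeasurable v (volume.restrict (Set.Ioo a b)) →
      (∀ x ∈ Set.Ioo a b, |v x| ≤ C) →
      IntegrableOn (fun t => u t * v t) (Set.Ioo a b) := by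
    intro u v C hC hu hv hvC
    refine Integrable.mono (hu.abs.mul_const C)
      ((hu.aestronglyMeasurable.aemeasurable.mul hv).aestronglyMeasurable) ?_
    filter_upwards [ae_restrict_mem measurableSet_Ioo] with x hx
    rw [Real.norm_eq_abs, Real.norm_eq_abs, abs_mul,
      abs_of_nonneg (mul_nonneg (abs_nonneg _) hC)]
    exact mul_le_mul_of_nonneg_left (hvC x hx) (abs_nonneg _)
  have hIF : IntegrableOn (fun t => φ t * f t ^ θ + ψ t * f t) (Set.Ioo a b) := by
    refine Integrable.add ?_ ?_
    · exact hmul_int φ (fun t => f t ^ θ) (M' ^ θ) hMθ0 hφ_int hfθmeas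
        (fun x hx => by rw [abs_of_nonneg (hfθnn x hx)]; exact hfθbd x hx)
    · exact hmul_int ψ f M' hM'0 hψ_int hf_meas
        (fun x hx => by rw [abs_of_nonneg (hf_nonneg x hx)]; exact hfM' x hx)
  have hIΦ : ∀ n, IntegrableOn (fun t => Φ n t * f t ^ θ + Θ n t * f t) (Set.Ioo a b) := by
    intro n
    refine Integrable.add ?_ ?_
    · exact hmul_int (Φ n) (fun t => f t ^ θ) (M' ^ θ) hMθ0 (hΦint n).integrableOn hfθmeas
        (fun x hx => by rw [abs_of_nonneg (hfθnn x hx)]; exact hfθbd x hx)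
    · exact hmul_int (Θ n) f M' hM'0 (hΘint n).integrableOn hf_meas
        (fun x hx => by rw [abs_of_nonneg (hf_nonneg x hx)]; exact hfM' x hx)
  have hErrInt : ∀ n, IntegrableOn
      (fun x => |φ x - Φ n x| * M' ^ θ + |ψ x - Θ n x| * M') (Set.Ioo a b) := fun n =>
    ((hφ_int.sub (hΦint n).integrableOn).abs.mul_const _).add
      ((hψ_int.sub (hΘint n).integrableOn).abs.mul_const _)
  set ωn : ℕ → ℝ := fun n =>
    ω + ∫ x in Set.Ioo a b, (|φ x - Φ n x| * M' ^ θ + |ψ x - Θ n x| * M') with hωndef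
  have hωn0 : ∀ n, 0 ≤ ωn n := fun n => add_nonneg hω (setIntegral_nonneg measurableSet_Ioo
    (fun x _ => add_nonneg (mul_nonneg (abs_nonneg _) hMθ0) (mul_nonneg (abs_nonneg _) hM'0)))
  have hineqn : ∀ n, ∀ lam ∈ Set.Ioo a b,
      f lam ≤ ωn n + ∫ t in Set.Ioo lam b, (Φ n t * f t ^ θ + Θ n t * f t) := by
    intro n lam hlam
    have hsub : Set.Ioo lam b ⊆ Set.Ioo a b := fun x hx => ⟨lt_trans hlam.1 hx.1, hx.2⟩
    refine (hineq lam hlam).trans ?_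
    have hstep : ∫ t in Set.Ioo lam b, (φ t * f t ^ θ + ψ t * f t)
        ≤ ∫ t in Set.Ioo lam b, ((Φ n t * f t ^ θ + Θ n t * f t)
            + (|φ t - Φ n t| * M' ^ θ + |ψ t - Θ n t| * M')) := by
      have hsum : IntegrableOn (fun t => (Φ n t * f t ^ θ + Θ n t * f t)
          + (|φ t - Φ n t| * M' ^ θ + |ψ t - Θ n t| * M')) (Set.Ioo a b) :=
        (hIΦ n).add (hErrInt n)
      refine setIntegral_mono_on (hIF.mono_set hsub)
        (hsum.mono_set hsub) measurableSet_Ioo ?_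
      intro x hx
      have hx' := hsub hx
      have e1 : (φ x - Φ n x) * f x ^ θ ≤ |φ x - Φ n x| * f x ^ θ :=
        mul_le_mul_of_nonneg_right (le_abs_self _) (hfθnn x hx')
      have e2 : |φ x - Φ n x| * f x ^ θ ≤ |φ x - Φ n x| * M' ^ θ :=
        mul_le_mul_of_nonneg_left (hfθbd x hx') (abs_nonneg _)
      have e3 : (ψ x - Θ n x) * f x ≤ |ψ x - Θ n x| * f x :=
        mul_le_mul_of_nonneg_right (le_abs_self _) (hf_nonneg x hx')
      have e4 : |ψ x - Θ n x| * f x ≤ |ψ x - Θ n x| * M' :=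
        mul_le_mul_of_nonneg_left (hfM' x hx') (abs_nonneg _)
      nlinarith [e1, e2, e3, e4]
    rw [integral_add ((hIΦ n).mono_set hsub) ((hErrInt n).mono_set hsub)] at hstep
    have herrmono : ∫ t in Set.Ioo lam b, (|φ t - Φ n t| * M' ^ θ + |ψ t - Θ n t| * M')
        ≤ ∫ t in Set.Ioo a b, (|φ t - Φ n t| * M' ^ θ + |ψ t - Θ n t| * M') := by
      refine setIntegral_mono_set (hErrInt n) ?_ (HasSubset.Subset.eventuallyLE hsub)
      filter_upwards with x using add_nonneg (mul_nonneg (abs_nonneg _) hMθ0)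
        (mul_nonneg (abs_nonneg _) hM'0)
    rw [hωndef]
    simp only
    linarith
  have hcore : ∀ n, ∀ lam ∈ Set.Ioo a b,
      f lam ≤ Real.exp (∫ t in Set.Ioo lam b, Θ n t) *
        ((ωn n) ^ (1-θ) + (1-θ) *
          ∫ s in Set.Ioo lam b, Φ n s * Real.exp ((θ-1) * ∫ t in Set.Ioo s b, Θ n t))
          ^ (1/(1-θ)) :=
    fun n => s14_core a b hab f (Φ n) (Θ n) (hΦc n) (hΘc n) (hΦnn n) (hΘnn n)
      hf_nonneg M' hM'0 hfM' hf_meas (ωn n) θ (hωn0 n) hθ0 hθ1 (hineqn n)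
  -- limit n → ∞
  intro lam hlam
  have hsubl : Set.Ioo lam b ⊆ Set.Ioo a b := fun x hx => ⟨lt_trans hlam.1 hx.1, hx.2⟩
  set W : ℝ → ℝ := fun l => ∫ t in l..b, ψ₀ t with hWdef
  have hWc : Continuous W := by
    have h1 : Continuous (fun l => ∫ t in (0:ℝ)..l, ψ₀ t) := hψ₀int.continuous_primitive 0
    have h2 : W = fun l => (∫ t in (0:ℝ)..b, ψ₀ t) - ∫ t in (0:ℝ)..l, ψ₀ t := by
      funext l
      have h3 : (∫ t in (0:ℝ)..l, ψ₀ t) + (∫ t in l..b, ψ₀ t) = ∫ t in (0:ℝ)..b, ψ₀ t :=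
        intervalIntegral.integral_add_adjacent_intervals
          (hψ₀int.intervalIntegrable) (hψ₀int.intervalIntegrable)
      rw [hWdef]
      simp only
      linarith
    rw [h2]
    exact continuous_const.sub h1
  have hWnn : ∀ l, l ≤ b → 0 ≤ W l := fun l hl =>
    intervalIntegral.integral_nonneg hl (fun t _ => hψ₀nn t)
  have hWIoo : ∀ s, a < s → s ≤ b → (∫ t in Set.Ioo s b, ψ t) = W s := by
    intro s hsa hsb
    have hcong : Set.EqOn ψ ψ₀ (Set.Ioo s b) := by
      intro x hx
      have hxmem : x ∈ Set.Ioo a b := ⟨lt_trans hsa hx.1, hx.2⟩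
      rw [hψ₀def]
      exact (Set.indicator_of_mem hxmem ψ).symm
    rw [setIntegral_congr_fun measurableSet_Ioo hcong, hWdef]
    simp only
    rw [intervalIntegral.integral_of_le hsb, integral_Ioc_eq_integral_Ioo]
  set Wn : ℕ → ℝ → ℝ := fun n l => ∫ t in l..b, Θ n t with hWndef
  have hWnc : ∀ n, Continuous (Wn n) := fun n =>
    continuous_iff_continuousAt.mpr (fun x =>
      (intervalIntegral.integral_hasDerivAt_left ((hΘc n).intervalIntegrable _ _)
        ((hΘc n).stronglyMeasurableAtFilter _ _) (hΘc n).continuousAt).continuousAt)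
  have hWnnn : ∀ n l, l ≤ b → 0 ≤ Wn n l := fun n l hl =>
    intervalIntegral.integral_nonneg hl (fun t _ => hΘnn n t)
  have hWnIoo : ∀ n s, s ≤ b → (∫ t in Set.Ioo s b, Θ n t) = Wn n s := by
    intro n s hsb
    rw [hWndef]
    simp only
    rw [intervalIntegral.integral_of_le hsb, integral_Ioc_eq_integral_Ioo]
  have hWerr : ∀ n, ∀ s, a < s → s ≤ b → |Wn n s - W s| ≤ 1/(n+1:ℝ) := by
    intro n s hsa hsb
    have h1 : Wn n s - W s = ∫ t in Set.Ioo s b, (Θ n t - ψ₀ t) := by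
      rw [← hWnIoo n s hsb, hWdef]
      simp only
      rw [intervalIntegral.integral_of_le hsb, integral_Ioc_eq_integral_Ioo,
        integral_sub ((hΘint n).integrableOn) (hψ₀int.integrableOn)]
    rw [h1]
    have h2 : |∫ t in Set.Ioo s b, (Θ n t - ψ₀ t)| ≤ ∫ t in Set.Ioo s b, |Θ n t - ψ₀ t| := by
      simpa [Real.norm_eq_abs] using
        norm_integral_le_integral_norm (μ := volume.restrict (Set.Ioo s b))
          (fun t => Θ n t - ψ₀ t)
    refine h2.trans (le_trans (setIntegral_le_integral ((hΘint n).sub hψ₀int).abs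
      (Filter.Eventually.of_forall fun x => abs_nonneg _)) ?_)
    have h4 : (fun x => |Θ n x - ψ₀ x|) = fun x => |ψ₀ x - Θ n x| := by
      funext x
      exact abs_sub_comm _ _
    rw [h4]
    exact hΘerr n
  have hωnerr : ∀ n, ωn n - ω ≤ (M' ^ θ + M') * (1/(n+1:ℝ)) := by
    intro n
    have hin1 : IntegrableOn (fun x => |φ x - Φ n x| * M' ^ θ) (Set.Ioo a b) :=
      (hφ_int.sub (hΦint n).integrableOn).abs.mul_const _
    have hin2 : IntegrableOn (fun x => |ψ x - Θ n x| * M') (Set.Ioo a b) :=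
      (hψ_int.sub (hΘint n).integrableOn).abs.mul_const _
    rw [hωndef]
    simp only [add_sub_cancel_left]
    rw [integral_add hin1 hin2, integral_mul_const, integral_mul_const]
    have h1 := mul_le_mul_of_nonneg_right (hΦE n) hMθ0
    have h2 := mul_le_mul_of_nonneg_right (hΘE n) hM'0
    nlinarith
  -- Lipschitz bound for exp on nonpositive reals
  have hexpLip : ∀ x y : ℝ, x ≤ 0 → y ≤ 0 → |Real.exp x - Real.exp y| ≤ |x - y| := by
    have key : ∀ x y : ℝ, x ≤ y → y ≤ 0 → Real.exp y - Real.exp x ≤ y - x := by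
      intro x y hxy hy0
      have hexy : Real.exp x = Real.exp y * Real.exp (x - y) := by
        rw [← Real.exp_add]
        ring_nf
      have h1 : (x - y) + 1 ≤ Real.exp (x - y) := Real.add_one_le_exp (x - y)
      have h2 : Real.exp y ≤ 1 := Real.exp_le_one_iff.mpr hy0
      have h3 : Real.exp y * ((x - y) + 1) ≤ Real.exp y * Real.exp (x - y) :=
        mul_le_mul_of_nonneg_left h1 (Real.exp_pos y).le
      have h4 : Real.exp y * (y - x) ≤ 1 * (y - x) :=
        mul_le_mul_of_nonneg_right h2 (by linarith)
      nlinarith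
    intro x y hx hy
    rcases le_total x y with h | h
    · rw [abs_sub_comm (Real.exp x), abs_of_nonneg (sub_nonneg.mpr (Real.exp_le_exp.mpr h)),
        abs_sub_comm x, abs_of_nonneg (sub_nonneg.mpr h)]
      exact key x y h hy
    · rw [abs_of_nonneg (sub_nonneg.mpr (Real.exp_le_exp.mpr h)),
        abs_of_nonneg (sub_nonneg.mpr h)]
      exact key y x h hx
  set Cφ : ℝ := ∫ x in Set.Ioo a b, |φ x| with hCφdef
  have hCφ0 : 0 ≤ Cφ := setIntegral_nonneg measurableSet_Ioo (fun x _ => abs_nonneg _)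
  set J : ℝ := ∫ s in Set.Ioo lam b, φ s * Real.exp ((θ-1) * W s) with hJdef
  set Jn : ℕ → ℝ := fun n => ∫ s in Set.Ioo lam b, Φ n s * Real.exp ((θ-1) * Wn n s) with hJndef
  have hFnint : ∀ n, IntegrableOn (fun s => Φ n s * Real.exp ((θ-1) * Wn n s))
      (Set.Ioo lam b) := fun n =>
    (((hΦc n).mul ((continuous_const.mul (hWnc n)).rexp)).integrableOn_Icc).mono_set
      Set.Ioo_subset_Icc_self
  have hFintW : IntegrableOn (fun s => φ s * Real.exp ((θ-1) * W s)) (Set.Ioo a b) := by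
    refine hmul_int φ (fun s => Real.exp ((θ-1) * W s)) 1 zero_le_one hφ_int
      ((continuous_const.mul hWc).rexp).aemeasurable ?_
    intro x hx
    rw [abs_of_nonneg (Real.exp_pos _).le]
    refine Real.exp_le_one_iff.mpr ?_
    have := hWnn x hx.2.le
    nlinarith
  have hJerr : ∀ n, |Jn n - J| ≤ (1 + (1-θ) * Cφ) * (1/(n+1:ℝ)) := by
    intro n
    have hbnd : IntegrableOn (fun s => |Φ n s - φ s| + |φ s| * ((1-θ) * (1/(n+1:ℝ))))
        (Set.Ioo a b) :=
      ((hΦint n).integrableOn.sub hφ_int).abs.add (hφ_int.abs.mul_const _)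
    have h0 : Jn n - J = ∫ s in Set.Ioo lam b,
        (Φ n s * Real.exp ((θ-1) * Wn n s) - φ s * Real.exp ((θ-1) * W s)) := by
      rw [hJndef, hJdef]
      simp only
      rw [integral_sub (hFnint n) (hFintW.mono_set hsubl)]
    rw [h0]
    have h2 : |∫ s in Set.Ioo lam b,
          (Φ n s * Real.exp ((θ-1) * Wn n s) - φ s * Real.exp ((θ-1) * W s))|
        ≤ ∫ s in Set.Ioo lam b,
          |Φ n s * Real.exp ((θ-1) * Wn n s) - φ s * Real.exp ((θ-1) * W s)| := by
      simpa [Real.norm_eq_abs] using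
        norm_integral_le_integral_norm (μ := volume.restrict (Set.Ioo lam b))
          (fun s => Φ n s * Real.exp ((θ-1) * Wn n s) - φ s * Real.exp ((θ-1) * W s))
    refine h2.trans ?_
    have h3 : ∫ s in Set.Ioo lam b,
          |Φ n s * Real.exp ((θ-1) * Wn n s) - φ s * Real.exp ((θ-1) * W s)|
        ≤ ∫ s in Set.Ioo lam b, (|Φ n s - φ s| + |φ s| * ((1-θ) * (1/(n+1:ℝ)))) := by
      refine setIntegral_mono_on ((hFnint n).sub (hFintW.mono_set hsubl)).abs
        (hbnd.mono_set hsubl) measurableSet_Ioo ?_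
      intro s hs
      have hsab : s ∈ Set.Ioo a b := hsubl hs
      have hxn0 : (θ-1) * Wn n s ≤ 0 :=
        mul_nonpos_of_nonpos_of_nonneg (by linarith) (hWnnn n s hsab.2.le)
      have hx0 : (θ-1) * W s ≤ 0 :=
        mul_nonpos_of_nonpos_of_nonneg (by linarith) (hWnn s hsab.2.le)
      have hern : Real.exp ((θ-1) * Wn n s) ≤ 1 := Real.exp_le_one_iff.mpr hxn0
      have hlip : |Real.exp ((θ-1) * Wn n s) - Real.exp ((θ-1) * W s)|
          ≤ (1-θ) * (1/(n+1:ℝ)) := by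
        refine (hexpLip _ _ hxn0 hx0).trans ?_
        have : (θ-1) * Wn n s - (θ-1) * W s = (θ-1) * (Wn n s - W s) := by ring
        rw [this, abs_mul, abs_of_nonpos (by linarith : θ - 1 ≤ 0)]
        have := hWerr n s hsab.1 hsab.2.le
        nlinarith [abs_nonneg (Wn n s - W s)]
      calc |Φ n s * Real.exp ((θ-1) * Wn n s) - φ s * Real.exp ((θ-1) * W s)|
          = |(Φ n s - φ s) * Real.exp ((θ-1) * Wn n s)
              + φ s * (Real.exp ((θ-1) * Wn n s) - Real.exp ((θ-1) * W s))| := by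
            congr 1
            ring
        _ ≤ |(Φ n s - φ s) * Real.exp ((θ-1) * Wn n s)|
              + |φ s * (Real.exp ((θ-1) * Wn n s) - Real.exp ((θ-1) * W s))| := abs_add_le _ _
        _ = |Φ n s - φ s| * Real.exp ((θ-1) * Wn n s)
              + |φ s| * |Real.exp ((θ-1) * Wn n s) - Real.exp ((θ-1) * W s)| := by
            rw [abs_mul, abs_mul, abs_of_nonneg (Real.exp_pos _).le]
        _ ≤ |Φ n s - φ s| * 1 + |φ s| * ((1-θ) * (1/(n+1:ℝ))) :=
            add_le_add (mul_le_mul_of_nonneg_left hern (abs_nonneg _))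
              (mul_le_mul_of_nonneg_left hlip (abs_nonneg _))
        _ = |Φ n s - φ s| + |φ s| * ((1-θ) * (1/(n+1:ℝ))) := by rw [mul_one]
    refine h3.trans ?_
    have h4 : ∫ s in Set.Ioo lam b, (|Φ n s - φ s| + |φ s| * ((1-θ) * (1/(n+1:ℝ))))
        ≤ ∫ s in Set.Ioo a b, (|Φ n s - φ s| + |φ s| * ((1-θ) * (1/(n+1:ℝ)))) := by
      refine setIntegral_mono_set hbnd ?_ (HasSubset.Subset.eventuallyLE hsubl)
      filter_upwards with x using add_nonneg (abs_nonneg _)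
        (mul_nonneg (abs_nonneg _) (by positivity))
    refine h4.trans ?_
    have hin3 : IntegrableOn (fun s => |Φ n s - φ s|) (Set.Ioo a b) :=
      ((hΦint n).integrableOn.sub hφ_int).abs
    have hin4 : IntegrableOn (fun s => |φ s| * ((1-θ) * (1/(n+1:ℝ)))) (Set.Ioo a b) :=
      hφ_int.abs.mul_const _
    rw [integral_add hin3 hin4, integral_mul_const]
    have h5 : ∫ s in Set.Ioo a b, |Φ n s - φ s| ≤ 1/(n+1:ℝ) := by
      have h6 : (fun s => |Φ n s - φ s|) = fun s => |φ s - Φ n s| := by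
        funext x
        exact abs_sub_comm _ _
      rw [h6]
      exact hΦE n
    have h7 : Cφ * ((1-θ) * (1/(n+1:ℝ))) ≤ (1-θ) * Cφ * (1/(n+1:ℝ)) := by nlinarith
    nlinarith [mul_nonneg hCφ0 (by positivity : (0:ℝ) ≤ (1-θ) * (1/(n+1:ℝ)))]
  -- tendsto machinery
  have hten : ∀ (u : ℕ → ℝ) (x C : ℝ), (∀ n, |u n - x| ≤ C * (1/(n+1:ℝ))) →
      Filter.Tendsto u Filter.atTop (nhds x) := by
    intro u x C h
    rw [← tendsto_sub_nhds_zero_iff]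
    refine squeeze_zero_norm (fun n => h n) ?_
    have := tendsto_one_div_add_atTop_nhds_zero_nat.const_mul C
    simpa using this
  have hWten : Filter.Tendsto (fun n => Wn n lam) Filter.atTop (nhds (W lam)) :=
    hten _ _ 1 (fun n => by
      rw [one_mul]
      exact hWerr n lam hlam.1 hlam.2.le)
  have hωnlow : ∀ n, 0 ≤ ωn n - ω := by
    intro n
    have h := setIntegral_nonneg (μ := volume) (s := Set.Ioo a b) measurableSet_Ioo
      (fun x _ => add_nonneg (mul_nonneg (abs_nonneg (φ x - Φ n x)) hMθ0)
        (mul_nonneg (abs_nonneg (ψ x - Θ n x)) hM'0))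
    rw [hωndef]
    simp only
    linarith
  have hωten : Filter.Tendsto ωn Filter.atTop (nhds ω) :=
    hten _ _ (M' ^ θ + M') (fun n => by
      rw [abs_of_nonneg (hωnlow n)]
      exact hωnerr n)
  have hJten : Filter.Tendsto Jn Filter.atTop (nhds J) := hten _ _ (1 + (1-θ) * Cφ) hJerr
  have hq0 : (0:ℝ) < 1/(1-θ) := by positivity
  have hAten : Filter.Tendsto (fun n => Real.exp (Wn n lam) *
        ((ωn n) ^ (1-θ) + (1-θ) * Jn n) ^ (1/(1-θ))) Filter.atTop
      (nhds (Real.exp (W lam) * (ω ^ (1-θ) + (1-θ) * J) ^ (1/(1-θ)))) := by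
    have t1 : Filter.Tendsto (fun n => Real.exp (Wn n lam)) Filter.atTop
        (nhds (Real.exp (W lam))) := (Real.continuous_exp.continuousAt.tendsto).comp hWten
    have t2 : Filter.Tendsto (fun n => (ωn n) ^ (1-θ)) Filter.atTop (nhds (ω ^ (1-θ))) :=
      ((hrpow (1-θ) h1θ.le).continuousAt.tendsto).comp hωten
    have t3 : Filter.Tendsto (fun n => (ωn n) ^ (1-θ) + (1-θ) * Jn n) Filter.atTop
        (nhds (ω ^ (1-θ) + (1-θ) * J)) := t2.add (tendsto_const_nhds.mul hJten)
    have t4 : Filter.Tendsto (fun n => ((ωn n) ^ (1-θ) + (1-θ) * Jn n) ^ (1/(1-θ)))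
        Filter.atTop (nhds ((ω ^ (1-θ) + (1-θ) * J) ^ (1/(1-θ)))) :=
      ((hrpow (1/(1-θ)) hq0.le).continuousAt.tendsto).comp t3
    exact t1.mul t4
  -- rewrite goal and conclude
  rw [hWIoo lam hlam.1 hlam.2.le]
  have hcong2 : Set.EqOn (fun s => φ s * Real.exp ((θ - 1) * ∫ t in Set.Ioo s b, ψ t))
      (fun s => φ s * Real.exp ((θ-1) * W s)) (Set.Ioo lam b) := by
    intro s hs
    simp only
    rw [hWIoo s (lt_trans hlam.1 hs.1) hs.2.le]
  rw [setIntegral_congr_fun measurableSet_Ioo hcong2]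
  refine ge_of_tendsto hAten ?_
  filter_upwards with n
  have h := hcore n lam hlam
  rw [hWnIoo n lam hlam.2.le] at h
  have hcong3 : Set.EqOn (fun s => Φ n s * Real.exp ((θ-1) * ∫ t in Set.Ioo s b, Θ n t))
      (fun s => Φ n s * Real.exp ((θ-1) * Wn n s)) (Set.Ioo lam b) := by
    intro s hs
    simp only
    rw [hWnIoo n s hs.2.le]
  rw [setIntegral_congr_fun measurableSet_Ioo hcong3] at h
  exact h

end
end
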